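/- Let T : ℝ^D → ℝ^D be a diffeomorphism equivariant with respect to a group G of orthogonal representations, and let p_u be a density invariant with respect to G. Then the pushforward density p_x(x) = p_u(T⁻¹(x))·|det J_{T⁻¹}(x)| is invariant with respect to G: p_x(R_g x) = p_x(x) for all g ∈ G, x ∈ ℝ^D. -/

import Mathlib

/-!
The inverse `S` of an equivariant map is equivariant, and differentiating `S ∘ R_g = R_g ∘ S`
gives `DS(R_g x) ∘ R_g = R_g ∘ DS(x)`. Since `R_g` is invertible, the Jacobian determinants of
`S` at `x` and at `R_g x` coincide, and the invariance of `p_u` does the rest.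
-/

open Matrix Function

section

variable {𝕜 E : Type*} [NontriviallyNormedField 𝕜] [NormedAddCommGroup E] [NormedSpace 𝕜 E]

theorem fderiv_comp_eq_comp_fderiv_of_semiconj {f : E → E} {L : E →L[𝕜] E} {x : E}
    (h : Semiconj f L L) (hfx : DifferentiableAt 𝕜 f x) (hfLx : DifferentiableAt 𝕜 f (L x)) :
    (fderiv 𝕜 f (L x)).comp L = L.comp (fderiv 𝕜 f x) := by
  have hcomm : f ∘ L = L ∘ f := funext h
  calc (fderiv 𝕜 f (L x)).comp L = fderiv 𝕜 (f ∘ L) x := by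
        rw [fderiv_comp x hfLx L.differentiableAt, L.fderiv]
    _ = fderiv 𝕜 (L ∘ f) x := by rw [hcomm]
    _ = L.comp (fderiv 𝕜 f x) := by
        rw [fderiv_comp x L.differentiableAt hfx, L.fderiv]

theorem det_fderiv_apply_eq_of_semiconj {f : E → E} {L : E →L[𝕜] E} {x : E}
    (hL : IsUnit L.det) (h : Semiconj f L L)
    (hfx : DifferentiableAt 𝕜 f x) (hfLx : DifferentiableAt 𝕜 f (L x)) :
    (fderiv 𝕜 f (L x)).det = (fderiv 𝕜 f x).det := by
  have hdet := congrArg ContinuousLinearMap.det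
    (fderiv_comp_eq_comp_fderiv_of_semiconj h hfx hfLx)
  simp only [ContinuousLinearMap.det, ContinuousLinearMap.toLinearMap_comp,
    LinearMap.det_comp] at hdet
  exact hL.mul_left_cancel (by rw [← hdet, mul_comm])

end

theorem det_fderiv_mulVec_eq_of_semiconj {n 𝕜 : Type*} [Fintype n] [DecidableEq n]
    [NontriviallyNormedField 𝕜] {A : Matrix n n 𝕜} {f : (n → 𝕜) → (n → 𝕜)}
    (hA : IsUnit A.det) (h : Semiconj f (A *ᵥ ·) (A *ᵥ ·)) (hf : Differentiable 𝕜 f)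
    (x : n → 𝕜) :
    (fderiv 𝕜 f (A *ᵥ x)).det = (fderiv 𝕜 f x).det := by
  let L : (n → 𝕜) →L[𝕜] (n → 𝕜) := ⟨A.mulVecLin, continuous_const.matrix_mulVec continuous_id⟩
  have hL : IsUnit L.det := by
    change IsUnit (LinearMap.det A.mulVecLin)
    rwa [← toLin'_apply', LinearMap.det_toLin']
  exact det_fderiv_apply_eq_of_semiconj (L := L) hL h (hf x) (hf (A *ᵥ x))

theorem pushforward_density_invariant_general {D : ℕ} {G : Type*}
    (R : G → Matrix (Fin D) (Fin D) ℝ)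
    (hRunit : ∀ g, IsUnit (R g).det)
    (T S : (Fin D → ℝ) → (Fin D → ℝ))
    (hTS : Function.LeftInverse S T) (hST : Function.RightInverse S T)
    (hS : Differentiable ℝ S)
    (hequiv : ∀ g u, T (R g *ᵥ u) = R g *ᵥ T u)
    (pu : (Fin D → ℝ) → ℝ) (hpu : ∀ g u, pu (R g *ᵥ u) = pu u)
    (px : (Fin D → ℝ) → ℝ)
    (hpx : ∀ x, px x = pu (S x) * |(fderiv ℝ S x).det|) :
    ∀ g x, px (R g *ᵥ x) = px x := by
  intro g x
  have hSequiv : Semiconj S (R g *ᵥ ·) (R g *ᵥ ·) :=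
    Semiconj.inverse_left (hequiv g) hTS hST
  rw [hpx, hpx, hSequiv x, hpu, det_fderiv_mulVec_eq_of_semiconj (hRunit g) hSequiv hS]

/-- If `T` is a diffeomorphism of `ℝ^D` (with differentiable inverse `S`) that is
equivariant with respect to a group `G` represented by matrices of determinant of
absolute value 1, and the base density `p_u` is `G`-invariant, then the pushforward
density `p_x x = p_u (S x) * |det J_S x|` is `G`-invariant. -/
theorem pushforward_density_invariant {D : ℕ} {G : Type*} [Group G]
    (R : G → Matrix (Fin D) (Fin D) ℝ)
    (hRunit : ∀ g, IsUnit (R g).det)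
    (hRdet : ∀ g, |(R g).det| = 1)
    (T S : (Fin D → ℝ) → (Fin D → ℝ))
    (hTS : Function.LeftInverse S T) (hST : Function.RightInverse S T)
    (hT : Differentiable ℝ T) (hS : Differentiable ℝ S)
    (hequiv : ∀ g u, T (R g *ᵥ u) = R g *ᵥ T u)
    (pu : (Fin D → ℝ) → ℝ) (hpu : ∀ g u, pu (R g *ᵥ u) = pu u)
    (px : (Fin D → ℝ) → ℝ)
    (hpx : ∀ x, px x = pu (S x) * |(fderiv ℝ S x).det|) :
    ∀ g x, px (R g *ᵥ x) = px x :=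
  pushforward_density_invariant_general R hRunit T S hTS hST hS hequiv pu hpu px hpx
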